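/- Let G = A ∗_C B be an amalgamated product of groups A and B over monomorphisms ∂₁ : C → A and ∂₂ : C → B. Let X be an A-graph, Y a B-graph, x a vertex of X fixed by ∂₁(C), and y a vertex of Y fixed by ∂₂(C). Let Z be the C-pushout of G×_A X and G×_B Y with respect to (the images of) x and y. Then the composition X ↪ G×_A X → Z of the canonical embedding with the quotient morphism is an A-equivariant embedding of graphs (injective on vertices and on edges); analogously, the composition Y ↪ G×_B Y → Z is a B-equivariant embedding. -/

import Mathlib

open Monoid

/-! ### The amalgamated product of two groups -/

/-- The amalgamated product `G₁ ∗_C G₂` determined by `G₁ ←f₁− C −f₂→ G₂`: the quotient of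
the free product `G₁ ∗ G₂` by the normal closure of the elements `f₁ c · (f₂ c)⁻¹`. -/
abbrev Amal {C G₁ G₂ : Type*} [Group C] [Group G₁] [Group G₂]
    (f₁ : C →* G₁) (f₂ : C →* G₂) : Type _ :=
  Coprod G₁ G₂ ⧸ Subgroup.normalClosure
    {x : Coprod G₁ G₂ | ∃ c : C, x = Coprod.inl (f₁ c) * (Coprod.inr (f₂ c))⁻¹}

/-- The canonical homomorphism `G₁ →* G₁ ∗_C G₂`. -/
def Amal.inl {C G₁ G₂ : Type*} [Group C] [Group G₁] [Group G₂]
    (f₁ : C →* G₁) (f₂ : C →* G₂) : G₁ →* Amal f₁ f₂ :=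
  (QuotientGroup.mk' _).comp Coprod.inl

/-- The canonical homomorphism `G₂ →* G₁ ∗_C G₂`. -/
def Amal.inr {C G₁ G₂ : Type*} [Group C] [Group G₁] [Group G₂]
    (f₁ : C →* G₁) (f₂ : C →* G₂) : G₂ →* Amal f₁ f₂ :=
  (QuotientGroup.mk' _).comp Coprod.inr

/-! ### The induced `G`-set `G ×_A S` along a homomorphism `A →* G` -/

/-- The relation defining `G ×_A S` along `ι : A →* G`: `(g · ι a, s) ~ (g, a • s)`. -/
def IndRelH {A G : Type*} [Group A] [Group G] (ι : A →* G) (S : Type*) [MulAction A S] :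
    G × S → G × S → Prop :=
  fun p q => ∃ a : A, p.1 = q.1 * ι a ∧ q.2 = a • p.2

/-- The induced `G`-set `G ×_A S` along `ι : A →* G`. -/
def IndSetH {A G : Type*} [Group A] [Group G] (ι : A →* G) (S : Type*) [MulAction A S] :
    Type _ :=
  Quot (IndRelH ι S)

/-- The class of a pair `(g, s)` in `G ×_A S`. -/
def IndSetH.mk {A G : Type*} [Group A] [Group G] (ι : A →* G) (S : Type*) [MulAction A S]
    (p : G × S) : IndSetH ι S :=
  Quot.mk _ p

instance {A G : Type*} [Group A] [Group G] (ι : A →* G) (S : Type*) [MulAction A S] :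
    SMul G (IndSetH ι S) :=
  ⟨fun g => Quot.map (fun p => (g * p.1, p.2)) (by
    rintro p q ⟨a, h1, h2⟩
    exact ⟨a, by dsimp only; rw [h1, mul_assoc], h2⟩)⟩

/-- `G` acts on `G ×_A S` by left multiplication on the first factor. -/
instance {A G : Type*} [Group A] [Group G] (ι : A →* G) (S : Type*) [MulAction A S] :
    MulAction G (IndSetH ι S) where
  one_smul := by
    rintro ⟨p⟩
    show IndSetH.mk ι S (1 * p.1, p.2) = IndSetH.mk ι S p
    rw [one_mul]
  mul_smul g h := by
    rintro ⟨p⟩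
    show IndSetH.mk ι S (g * h * p.1, p.2) = IndSetH.mk ι S (g * (h * p.1), p.2)
    rw [mul_assoc]

/-! ### The `C`-pushout of the induced graphs `G ×_A X` and `G ×_B Y` -/

section GraphPushout

variable {C G₁ G₂ : Type*} [Group C] [Group G₁] [Group G₂]
  (f₁ : C →* G₁) (f₂ : C →* G₂)
  {VX VY : Type*} [MulAction G₁ VX] [MulAction G₂ VY]

/-- The identifications defining the `C`-pushout of `G ×_{G₁} X` and `G ×_{G₂} Y` with
respect to `(x, y)`: for every `g ∈ G`, the vertex `g • x` is glued to `g • y`. -/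
def AmalPRel (x : VX) (y : VY) :
    (IndSetH (Amal.inl f₁ f₂) VX ⊕ IndSetH (Amal.inr f₁ f₂) VY) →
    (IndSetH (Amal.inl f₁ f₂) VX ⊕ IndSetH (Amal.inr f₁ f₂) VY) → Prop :=
  fun u v => ∃ g : Amal f₁ f₂,
    u = Sum.inl (IndSetH.mk (Amal.inl f₁ f₂) VX (g, x)) ∧
    v = Sum.inr (IndSetH.mk (Amal.inr f₁ f₂) VY (g, y))

/-- The vertex set of the `C`-pushout of `G ×_{G₁} X` and `G ×_{G₂} Y` w.r.t. `(x, y)`. -/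
def PushV (x : VX) (y : VY) : Type _ :=
  Quot (AmalPRel f₁ f₂ x y)

/-- The quotient map onto the vertex set of the `C`-pushout. -/
def PushV.mk (x : VX) (y : VY)
    (u : IndSetH (Amal.inl f₁ f₂) VX ⊕ IndSetH (Amal.inr f₁ f₂) VY) : PushV f₁ f₂ x y :=
  Quot.mk _ u

instance (x : VX) (y : VY) : SMul (Amal f₁ f₂) (PushV f₁ f₂ x y) :=
  ⟨fun g => Quot.map (fun u => g • u) (by
    rintro u v ⟨h, rfl, rfl⟩
    exact ⟨g * h, rfl, rfl⟩)⟩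

/-- The group `G = G₁ ∗_C G₂` acts on the `C`-pushout. -/
instance (x : VX) (y : VY) : MulAction (Amal f₁ f₂) (PushV f₁ f₂ x y) where
  one_smul := by
    rintro ⟨u⟩
    show PushV.mk f₁ f₂ x y ((1 : Amal f₁ f₂) • u) = PushV.mk f₁ f₂ x y u
    rw [one_smul]
  mul_smul g h := by
    rintro ⟨u⟩
    show PushV.mk f₁ f₂ x y ((g * h) • u) = PushV.mk f₁ f₂ x y (g • h • u)
    rw [mul_smul]

/-- The canonical map `X → Z` (composition `X ↪ G ×_{G₁} X → Z`). -/
def PushV.inX (x : VX) (y : VY) (v : VX) : PushV f₁ f₂ x y :=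
  PushV.mk f₁ f₂ x y (Sum.inl (IndSetH.mk (Amal.inl f₁ f₂) VX (1, v)))

/-- The canonical map `Y → Z` (composition `Y ↪ G ×_{G₂} Y → Z`). -/
def PushV.inY (x : VX) (y : VY) (w : VY) : PushV f₁ f₂ x y :=
  PushV.mk f₁ f₂ x y (Sum.inr (IndSetH.mk (Amal.inr f₁ f₂) VY (1, w)))

/-- The common image `z` of the vertices `x` and `y` in the `C`-pushout. -/
def PushV.basePt (x : VX) (y : VY) : PushV f₁ f₂ x y :=
  PushV.inX f₁ f₂ x y x

/-- The adjacency relation of the `C`-pushout of the graphs `G ×_{G₁} X` and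
`G ×_{G₂} Y`: edges are the edges coming from the copies of `X` and of `Y`. -/
def PushAdj (X : SimpleGraph VX) (Y : SimpleGraph VY) (x : VX) (y : VY) :
    PushV f₁ f₂ x y → PushV f₁ f₂ x y → Prop :=
  fun u v =>
    (∃ (g : Amal f₁ f₂) (a b : VX), X.Adj a b ∧
      u = PushV.mk f₁ f₂ x y (Sum.inl (IndSetH.mk (Amal.inl f₁ f₂) VX (g, a))) ∧
      v = PushV.mk f₁ f₂ x y (Sum.inl (IndSetH.mk (Amal.inl f₁ f₂) VX (g, b)))) ∨
    (∃ (g : Amal f₁ f₂) (a b : VY), Y.Adj a b ∧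
      u = PushV.mk f₁ f₂ x y (Sum.inr (IndSetH.mk (Amal.inr f₁ f₂) VY (g, a))) ∧
      v = PushV.mk f₁ f₂ x y (Sum.inr (IndSetH.mk (Amal.inr f₁ f₂) VY (g, b))))

/-- The `C`-pushout `Z` of the `G`-graphs `G ×_{G₁} X` and `G ×_{G₂} Y` w.r.t. `(x, y)`. -/
def PushGraph (X : SimpleGraph VX) (Y : SimpleGraph VY) (x : VX) (y : VY) :
    SimpleGraph (PushV f₁ f₂ x y) :=
  SimpleGraph.fromRel (PushAdj f₁ f₂ X Y x y)

end GraphPushout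

/-!
The glued vertices of `Z` are the translates `g • z` of the common image `z` of `x` and `y`, and
`g • z = g' • z` exactly when `g⁻¹ * g'` lies in the subgroup `K` generated by `ι₁ (Stab x)` and
`ι₂ (Stab y)`; every other vertex of `Z` has a single preimage. So everything reduces to two facts
about `K`: if `ι₁ α * k * ι₁ β ∈ K` for some `k ∈ K`, then `α * σ * β ∈ Stab x` for some
`σ ∈ Stab x` (this makes `X → Z` injective and reflect edges), and if `ι₁ α * k * ι₂ β ∈ K`, then
`β ∈ Stab y` (so no copy of `Y` contributes an edge between vertices of `X`).

Both come from the normal form in `A ∗_C B`: acting on a normal word by an element of `Stab x` or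
`Stab y` only changes, adds or removes its first letter, and a first letter outside the stabiliser
stays in its right coset; so the sequence of right cosets of the letters outside the stabilisers
is `K`-invariant. The statement for `Y` follows
from the one for `X` by exchanging the two factors.
-/

namespace Monoid.PushoutI

open CoprodI

variable {ι : Type*} {G : ι → Type*} [∀ i, Group (G i)] {H : Type*} [Group H]
  {φ : ∀ i, H →* G i} (S : ∀ i, Subgroup (G i))

open scoped Classical in
/-- Records the right coset `S i * g` as the left coset of `g⁻¹`. -/
noncomputable def cosetLetter (i : ι) (g : G i) : List (Σ i, G i ⧸ S i) :=
  if g ∈ S i then [] else [⟨i, ((g⁻¹ : G i) : G i ⧸ S i)⟩]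

noncomputable def cosetWord (w : Word G) : List (Σ i, G i ⧸ S i) :=
  w.toList.flatMap fun l => cosetLetter S l.1 l.2

variable {S}

theorem cosetLetter_eq_nil {i : ι} {g : G i} : cosetLetter S i g = [] ↔ g ∈ S i := by
  unfold cosetLetter; split_ifs with h <;> simp [h]

theorem cosetLetter_mul_of_mem {i : ι} {s : G i} (hs : s ∈ S i) (g : G i) :
    cosetLetter S i (s * g) = cosetLetter S i g := by
  have hcoset : (((s * g)⁻¹ : G i) : G i ⧸ S i) = ((g⁻¹ : G i) : G i ⧸ S i) :=
    QuotientGroup.eq.2 (by simpa using hs)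
  unfold cosetLetter
  rw [hcoset]
  by_cases hg : g ∈ S i
  · rw [if_pos hg, if_pos ((mul_mem_cancel_left hs).2 hg)]
  · rw [if_neg hg, if_neg (mt (mul_mem_cancel_left hs).1 hg)]

theorem mk_inv_eq_mk_inv_of_cosetLetter_eq {i : ι} {g g' : G i}
    (h : cosetLetter S i g = cosetLetter S i g') :
    ((g⁻¹ : G i) : G i ⧸ S i) = ((g'⁻¹ : G i) : G i ⧸ S i) := by
  unfold cosetLetter at h
  split_ifs at h with hg hg'
  · exact QuotientGroup.eq.2 (by simpa using mul_mem hg (inv_mem hg'))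
  · simpa using h

theorem mem_of_cosetLetter_eq_of_ne {i j : ι} (hij : i ≠ j) {g : G i} {g' : G j}
    (h : cosetLetter S i g = cosetLetter S j g') : g ∈ S i := by
  by_contra hg
  unfold cosetLetter at h
  rw [if_neg hg] at h
  split_ifs at h
  simp only [List.cons.injEq, and_true, Sigma.mk.injEq] at h
  exact hij h.1

namespace NormalWord

variable [DecidableEq ι] [∀ i, DecidableEq (G i)] {d : Transversal φ}

theorem cosetWord_rcons (hS : ∀ i, (φ i).range ≤ S i) {i : ι} (p : Pair d i) :
    cosetWord S (rcons i p).toWord = cosetLetter S i p.head ++ cosetWord S p.tail := by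
  set n := (d.compl i).equiv p.head
  have hhead : cosetLetter S i p.head = cosetLetter S i (n.2 : G i) := by
    rw [← Subgroup.IsComplement.equiv_fst_mul_equiv_snd (d.compl i) p.head]
    obtain ⟨c, hc⟩ := n.1.2
    exact cosetLetter_mul_of_mem (hS i ⟨c, hc⟩) _
  rw [hhead]
  simp only [rcons, Word.equivPair_symm, Word.rcons]
  split_ifs with h1
  · rw [h1, cosetLetter_eq_nil.2 (one_mem _)]
    rfl
  · simp [cosetWord, n]

theorem cosetWord_smul_of_mem (hS : ∀ i, (φ i).range ≤ S i) {i : ι} {s : G i} (hs : s ∈ S i)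
    (w : NormalWord d) : cosetWord S (s • w).toWord = cosetWord S w.toWord := by
  conv_rhs => rw [← (equivPair i).symm_apply_apply w]
  rw [summand_smul_def']
  exact (cosetWord_rcons hS _).trans
    ((congrArg (· ++ _) (cosetLetter_mul_of_mem hs _)).trans (cosetWord_rcons hS _).symm)

theorem cosetWord_smul_of_mem_iSup (hS : ∀ i, (φ i).range ≤ S i) {k : PushoutI φ}
    (hk : k ∈ ⨆ i, (S i).map (of i)) (w : NormalWord d) :
    cosetWord S (k • w).toWord = cosetWord S w.toWord := by
  refine Subgroup.iSup_induction _ (C := fun k => ∀ w : NormalWord d,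
    cosetWord S (k • w).toWord = cosetWord S w.toWord) hk ?_ ?_ ?_ w
  · rintro i _ ⟨s, hs, rfl⟩ w
    rw [of_smul_eq_smul, cosetWord_smul_of_mem hS hs]
  · intro w
    rw [one_smul]
  · intro k k' hk hk' w
    rw [mul_smul, hk, hk']

theorem exists_cosetWord_of_mul_smul_empty (hS : ∀ i, (φ i).range ≤ S i) {k : PushoutI φ}
    (hk : k ∈ ⨆ i, (S i).map (of i)) (j : ι) (γ : G j) :
    ∃ u ∈ S j, cosetWord S ((of j γ * k) • (empty : NormalWord d)).toWord =
      cosetLetter S j (γ * u) := by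
  set p := equivPair j (k • (empty : NormalWord d))
  have hp : cosetLetter S j p.head ++ cosetWord S p.tail = [] := by
    rw [← cosetWord_rcons hS, show rcons j p = k • empty from (equivPair j).symm_apply_apply _,
      cosetWord_smul_of_mem_iSup hS hk]
    rfl
  obtain ⟨hhead, htail⟩ := List.append_eq_nil_iff.1 hp
  refine ⟨p.head, cosetLetter_eq_nil.1 hhead, ?_⟩
  rw [mul_smul, of_smul_eq_smul, summand_smul_def']
  exact (cosetWord_rcons hS _).trans (by rw [htail, List.append_nil])

end NormalWord

open NormalWord

theorem exists_cosetLetter_eq_of_of_mul_mul_of_mem (hφ : ∀ i, Function.Injective (φ i))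
    (hS : ∀ i, (φ i).range ≤ S i) {i j : ι} {α : G i} {β : G j}
    {k : PushoutI φ} (hk : k ∈ ⨆ i, (S i).map (of i))
    (h : of i α * k * of j β ∈ ⨆ i, (S i).map (of i)) :
    ∃ u ∈ S i, ∃ v ∈ S j, cosetLetter S j (β⁻¹ * v) = cosetLetter S i (α * u) := by
  classical
  obtain ⟨d⟩ := transversal_nonempty φ hφ
  obtain ⟨v, hv, hβ⟩ := exists_cosetWord_of_mul_smul_empty (d := d) hS (inv_mem hk) j β⁻¹
  obtain ⟨u, hu, hα⟩ := exists_cosetWord_of_mul_smul_empty (d := d) hS (one_mem _) i α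
  have hβα : of j β⁻¹ * k⁻¹ = (of i α * k * of j β)⁻¹ * of i α := by
    simp only [mul_inv_rev, map_inv]
    group
  rw [hβα, mul_smul, cosetWord_smul_of_mem_iSup hS (inv_mem h)] at hβ
  rw [mul_one] at hα
  exact ⟨u, hu, v, hv, hβ.symm.trans hα⟩

theorem exists_mul_mem_of_of_mul_mul_of_mem (hφ : ∀ i, Function.Injective (φ i))
    (hS : ∀ i, (φ i).range ≤ S i) {i : ι} {α β : G i}
    {k : PushoutI φ} (hk : k ∈ ⨆ i, (S i).map (of i))
    (h : of i α * k * of i β ∈ ⨆ i, (S i).map (of i)) :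
    ∃ σ ∈ S i, α * σ * β ∈ S i := by
  obtain ⟨u, hu, v, hv, huv⟩ := exists_cosetLetter_eq_of_of_mul_mul_of_mem hφ hS hk h
  refine ⟨u * v⁻¹, mul_mem hu (inv_mem hv), ?_⟩
  simpa [mul_assoc] using inv_mem (QuotientGroup.eq.1 (mk_inv_eq_mk_inv_of_cosetLetter_eq huv))

theorem mem_of_of_mul_mul_of_mem (hφ : ∀ i, Function.Injective (φ i))
    (hS : ∀ i, (φ i).range ≤ S i) {i j : ι} (hij : i ≠ j) {α : G i} {β : G j}
    {k : PushoutI φ} (hk : k ∈ ⨆ i, (S i).map (of i))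
    (h : of i α * k * of j β ∈ ⨆ i, (S i).map (of i)) : β ∈ S j := by
  obtain ⟨u, -, v, hv, huv⟩ := exists_cosetLetter_eq_of_of_mul_mul_of_mem hφ hS hk h
  exact inv_mem_iff.1 ((mul_mem_cancel_right hv).1 (mem_of_cosetLetter_eq_of_ne hij.symm huv))

theorem of_mem_iSup_map_iff (hφ : ∀ i, Function.Injective (φ i))
    (hS : ∀ i, (φ i).range ≤ S i) {i : ι} {α : G i} :
    of (φ := φ) i α ∈ ⨆ i, (S i).map (of i) ↔ α ∈ S i := by
  refine ⟨fun h => ?_, fun h => Subgroup.mem_iSup_of_mem i ⟨α, h, rfl⟩⟩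
  obtain ⟨σ, hσ, h⟩ := exists_mul_mem_of_of_mul_mul_of_mem hφ hS (one_mem _)
    (β := 1) (by simpa using h)
  exact (mul_mem_cancel_right hσ).1 (by simpa using h)

end Monoid.PushoutI

universe u₁ u₂

namespace Amal

open Monoid.PushoutI

variable {C : Type*} {G₁ : Type u₁} {G₂ : Type u₂} [Group C] [Group G₁] [Group G₂]

/-- `G₁` and `G₂` lifted to a common universe, as the family indexed by `Bool` that
`Monoid.PushoutI` needs. -/
def factor (G₁ : Type u₁) (G₂ : Type u₂) : Bool → Type (max u₁ u₂)
  | true => ULift.{u₂} G₁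
  | false => ULift.{u₁} G₂

instance : ∀ b, Group (factor G₁ G₂ b)
  | true => inferInstanceAs (Group (ULift G₁))
  | false => inferInstanceAs (Group (ULift G₂))

def factorHom (f₁ : C →* G₁) (f₂ : C →* G₂) : ∀ b, C →* factor G₁ G₂ b
  | true => MulEquiv.ulift.symm.toMonoidHom.comp f₁
  | false => MulEquiv.ulift.symm.toMonoidHom.comp f₂

def factorSubgroup (S₁ : Subgroup G₁) (S₂ : Subgroup G₂) : ∀ b, Subgroup (factor G₁ G₂ b)
  | true => S₁.comap MulEquiv.ulift.toMonoidHom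
  | false => S₂.comap MulEquiv.ulift.toMonoidHom

variable {f₁ : C →* G₁} {f₂ : C →* G₂}

theorem factorHom_injective (hf₁ : Function.Injective f₁) (hf₂ : Function.Injective f₂) :
    ∀ b, Function.Injective (factorHom f₁ f₂ b)
  | true => fun _ _ h => hf₁ (congrArg ULift.down h)
  | false => fun _ _ h => hf₂ (congrArg ULift.down h)

theorem range_factorHom_le {S₁ : Subgroup G₁} {S₂ : Subgroup G₂} (hS₁ : f₁.range ≤ S₁)
    (hS₂ : f₂.range ≤ S₂) : ∀ b, (factorHom f₁ f₂ b).range ≤ factorSubgroup S₁ S₂ b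
  | true => by rintro _ ⟨c, rfl⟩; exact hS₁ ⟨c, rfl⟩
  | false => by rintro _ ⟨c, rfl⟩; exact hS₂ ⟨c, rfl⟩

variable (f₁ f₂) in
def toPushoutI : Amal f₁ f₂ →* PushoutI (factorHom f₁ f₂) :=
  QuotientGroup.lift _
    (Coprod.lift ((of true).comp MulEquiv.ulift.symm.toMonoidHom)
      ((of false).comp MulEquiv.ulift.symm.toMonoidHom))
    (Subgroup.normalClosure_le_normal <| by
      rintro _ ⟨c, rfl⟩
      rw [SetLike.mem_coe, MonoidHom.mem_ker, map_mul, map_inv, mul_inv_eq_one]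
      exact (of_apply_eq_base (factorHom f₁ f₂) true c).trans
        (of_apply_eq_base (factorHom f₁ f₂) false c).symm)

theorem inl_injective (hf₁ : Function.Injective f₁) (hf₂ : Function.Injective f₂) :
    Function.Injective (inl f₁ f₂) := fun _ _ h =>
  congrArg ULift.down <| of_injective (factorHom_injective hf₁ hf₂) true
    (congrArg (toPushoutI f₁ f₂) h)

theorem toPushoutI_mem {S₁ : Subgroup G₁} {S₂ : Subgroup G₂} {k : Amal f₁ f₂}
    (hk : k ∈ S₁.map (inl f₁ f₂) ⊔ S₂.map (inr f₁ f₂)) :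
    toPushoutI f₁ f₂ k ∈ ⨆ b, (factorSubgroup S₁ S₂ b).map (of b) := by
  have : S₁.map (inl f₁ f₂) ⊔ S₂.map (inr f₁ f₂) ≤
      (⨆ b, (factorSubgroup S₁ S₂ b).map (of b)).comap (toPushoutI f₁ f₂) := by
    refine sup_le ?_ ?_
    · rintro _ ⟨a, ha, rfl⟩
      exact Subgroup.mem_iSup_of_mem true ⟨ULift.up a, ha, rfl⟩
    · rintro _ ⟨b, hb, rfl⟩
      exact Subgroup.mem_iSup_of_mem false ⟨ULift.up b, hb, rfl⟩
  exact this hk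

variable {S₁ : Subgroup G₁} {S₂ : Subgroup G₂}

theorem exists_mul_mem_of_inl_mul_mul_inl_mem (hf₁ : Function.Injective f₁)
    (hf₂ : Function.Injective f₂) (hS₁ : f₁.range ≤ S₁) (hS₂ : f₂.range ≤ S₂) {α β : G₁}
    {k : Amal f₁ f₂} (hk : k ∈ S₁.map (inl f₁ f₂) ⊔ S₂.map (inr f₁ f₂))
    (h : inl f₁ f₂ α * k * inl f₁ f₂ β ∈ S₁.map (inl f₁ f₂) ⊔ S₂.map (inr f₁ f₂)) :
    ∃ σ ∈ S₁, α * σ * β ∈ S₁ := by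
  have h' := toPushoutI_mem h
  rw [map_mul, map_mul] at h'
  obtain ⟨σ, hσ, h⟩ := exists_mul_mem_of_of_mul_mul_of_mem (factorHom_injective hf₁ hf₂)
    (range_factorHom_le hS₁ hS₂) (toPushoutI_mem hk) h'
  exact ⟨σ.down, hσ, h⟩

theorem mem_of_inl_mul_mul_inr_mem (hf₁ : Function.Injective f₁)
    (hf₂ : Function.Injective f₂) (hS₁ : f₁.range ≤ S₁) (hS₂ : f₂.range ≤ S₂) {α : G₁} {β : G₂}
    {k : Amal f₁ f₂} (hk : k ∈ S₁.map (inl f₁ f₂) ⊔ S₂.map (inr f₁ f₂))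
    (h : inl f₁ f₂ α * k * inr f₁ f₂ β ∈ S₁.map (inl f₁ f₂) ⊔ S₂.map (inr f₁ f₂)) :
    β ∈ S₂ := by
  have h' := toPushoutI_mem h
  rw [map_mul, map_mul] at h'
  exact mem_of_of_mul_mul_of_mem (factorHom_injective hf₁ hf₂) (range_factorHom_le hS₁ hS₂)
    (by simp) (toPushoutI_mem hk) h'

theorem inl_mem_iff (hf₁ : Function.Injective f₁) (hf₂ : Function.Injective f₂)
    (hS₁ : f₁.range ≤ S₁) (hS₂ : f₂.range ≤ S₂) {α : G₁} :
    inl f₁ f₂ α ∈ S₁.map (inl f₁ f₂) ⊔ S₂.map (inr f₁ f₂) ↔ α ∈ S₁ := by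
  refine ⟨fun h => ?_, fun h => Subgroup.mem_sup_left ⟨α, h, rfl⟩⟩
  exact (of_mem_iSup_map_iff (factorHom_injective hf₁ hf₂) (range_factorHom_le hS₁ hS₂)).1
    (toPushoutI_mem h)

theorem inl_apply_eq_inr_apply (c : C) : inl f₁ f₂ (f₁ c) = inr f₁ f₂ (f₂ c) :=
  QuotientGroup.eq_iff_div_mem.2 (Subgroup.subset_normalClosure ⟨c, div_eq_mul_inv _ _⟩)

variable (f₁ f₂) in
def swap : Amal f₁ f₂ →* Amal f₂ f₁ :=
  QuotientGroup.lift _ (Coprod.lift (inr f₂ f₁) (inl f₂ f₁))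
    (Subgroup.normalClosure_le_normal <| by
      rintro _ ⟨c, rfl⟩
      rw [SetLike.mem_coe, MonoidHom.mem_ker, map_mul, map_inv, mul_inv_eq_one]
      exact (inl_apply_eq_inr_apply c).symm)

theorem swap_comp_inl : (swap f₁ f₂).comp (inl f₁ f₂) = inr f₂ f₁ := rfl

theorem swap_comp_inr : (swap f₁ f₂).comp (inr f₁ f₂) = inl f₂ f₁ := rfl

end Amal

theorem IndSetH.mk_eq_mk_iff {A G : Type*} [Group A] [Group G] {ι : A →* G} {S : Type*}
    [MulAction A S] {g g' : G} {s s' : S} :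
    IndSetH.mk ι S (g, s) = IndSetH.mk ι S (g', s') ↔ ∃ a, g = g' * ι a ∧ s' = a • s := by
  have hequiv : Equivalence (IndRelH ι S) :=
    { refl := fun _ => ⟨1, by simp, by simp⟩
      symm := fun ⟨a, h₁, h₂⟩ => ⟨a⁻¹, by simp [h₁], by simp [h₂]⟩
      trans := fun ⟨a, h₁, h₂⟩ ⟨b, h₃, h₄⟩ =>
        ⟨b * a, by rw [h₁, h₃, map_mul, mul_assoc], by rw [h₄, h₂, mul_smul]⟩ }
  exact ⟨fun h => hequiv.eqvGen_iff.1 (Quot.eqvGen_exact h), fun h => Quot.sound h⟩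

def IndSetH.map {A G G' : Type*} [Group A] [Group G] [Group G'] {ι : A →* G} {ι' : A →* G'}
    (ψ : G →* G') (hψ : ψ.comp ι = ι') (S : Type*) [MulAction A S] :
    IndSetH ι S → IndSetH ι' S :=
  Quot.map (fun p => (ψ p.1, p.2)) <| by
    rintro p q ⟨a, h₁, h₂⟩
    exact ⟨a, by rw [h₁, map_mul, ← hψ, MonoidHom.comp_apply], h₂⟩

theorem MonoidHom.range_le_stabilizer {C G V : Type*} [Group C] [Group G] [MulAction G V]
    {f : C →* G} {v : V} (hv : ∀ c, f c • v = v) : f.range ≤ MulAction.stabilizer G v := by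
  rintro _ ⟨c, rfl⟩
  exact hv c

namespace PushV

variable {C G₁ G₂ : Type*} [Group C] [Group G₁] [Group G₂] {f₁ : C →* G₁} {f₂ : C →* G₂}
  {VX VY : Type*} [MulAction G₁ VX] [MulAction G₂ VY] {x : VX} {y : VY}

def baseStabilizer (f₁ : C →* G₁) (f₂ : C →* G₂) (x : VX) (y : VY) : Subgroup (Amal f₁ f₂) :=
  (MulAction.stabilizer G₁ x).map (Amal.inl f₁ f₂) ⊔
    (MulAction.stabilizer G₂ y).map (Amal.inr f₁ f₂)

def IsBaseTranslate (x : VX) (y : VY) :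
    IndSetH (Amal.inl f₁ f₂) VX ⊕ IndSetH (Amal.inr f₁ f₂) VY → Amal f₁ f₂ → Prop
  | .inl p, g => p = IndSetH.mk _ VX (g, x)
  | .inr q, g => q = IndSetH.mk _ VY (g, y)

theorem isBaseTranslate_inl {g₀ g : Amal f₁ f₂} {v : VX}
    (h : IsBaseTranslate x y (.inl (IndSetH.mk _ VX (g₀, v))) g) :
    ∃ r, g = g₀ * Amal.inl f₁ f₂ r ∧ v = r • x := by
  obtain ⟨a, h₁, h₂⟩ := IndSetH.mk_eq_mk_iff.1 h
  exact ⟨a⁻¹, by simp [h₁], by simp [h₂]⟩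

theorem isBaseTranslate_inr {g₀ g : Amal f₁ f₂} {w : VY}
    (h : IsBaseTranslate x y (.inr (IndSetH.mk _ VY (g₀, w))) g) :
    ∃ r, g = g₀ * Amal.inr f₁ f₂ r ∧ w = r • y := by
  obtain ⟨a, h₁, h₂⟩ := IndSetH.mk_eq_mk_iff.1 h
  exact ⟨a⁻¹, by simp [h₁], by simp [h₂]⟩

theorem inv_mul_mem_of_isBaseTranslate
    {u : IndSetH (Amal.inl f₁ f₂) VX ⊕ IndSetH (Amal.inr f₁ f₂) VY} {g g' : Amal f₁ f₂}
    (h : IsBaseTranslate x y u g) (h' : IsBaseTranslate x y u g') :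
    g⁻¹ * g' ∈ baseStabilizer f₁ f₂ x y := by
  cases u with
  | inl p =>
    obtain ⟨a, h₁, h₂⟩ := IndSetH.mk_eq_mk_iff.1 (h.symm.trans h')
    refine Subgroup.mem_sup_left ⟨a⁻¹, inv_mem h₂.symm, ?_⟩
    simp [h₁]
  | inr q =>
    obtain ⟨a, h₁, h₂⟩ := IndSetH.mk_eq_mk_iff.1 (h.symm.trans h')
    refine Subgroup.mem_sup_right ⟨a⁻¹, inv_mem h₂.symm, ?_⟩
    simp [h₁]

def GlueRel (x : VX) (y : VY) (u v : IndSetH (Amal.inl f₁ f₂) VX ⊕ IndSetH (Amal.inr f₁ f₂) VY) :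
    Prop :=
  u = v ∨ ∃ g g', IsBaseTranslate x y u g ∧ IsBaseTranslate x y v g' ∧
    g⁻¹ * g' ∈ baseStabilizer f₁ f₂ x y

theorem glueRel_equivalence : Equivalence (GlueRel (f₁ := f₁) (f₂ := f₂) x y) where
  refl _ := .inl rfl
  symm := by
    rintro u v (rfl | ⟨g, g', hg, hg', hmem⟩)
    · exact .inl rfl
    · exact .inr ⟨g', g, hg', hg, by simpa using inv_mem hmem⟩
  trans := by
    rintro u v w (rfl | ⟨g, g', hg, hg', hmem⟩) (rfl | ⟨g'', g''', hg'', hg''', hmem'⟩)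
    · exact .inl rfl
    · exact .inr ⟨g'', g''', hg'', hg''', hmem'⟩
    · exact .inr ⟨g, g', hg, hg', hmem⟩
    · refine .inr ⟨g, g''', hg, hg''', ?_⟩
      have := mul_mem (mul_mem hmem (inv_mul_mem_of_isBaseTranslate hg' hg'')) hmem'
      simpa [mul_assoc] using this

theorem glueRel_of_mk_eq_mk {u v : IndSetH (Amal.inl f₁ f₂) VX ⊕ IndSetH (Amal.inr f₁ f₂) VY}
    (h : PushV.mk f₁ f₂ x y u = PushV.mk f₁ f₂ x y v) : GlueRel x y u v := by
  refine glueRel_equivalence.eqvGen_iff.1 (Relation.EqvGen.mono ?_ _ _ (Quot.eqvGen_exact h))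
  rintro _ _ ⟨g, rfl, rfl⟩
  exact .inr ⟨g, g, rfl, rfl, by simp⟩

theorem mk_inl_mk_inl_eq_inX (g : G₁) (v : VX) :
    PushV.mk f₁ f₂ x y (.inl (IndSetH.mk _ VX (Amal.inl f₁ f₂ g, v))) = inX f₁ f₂ x y (g • v) :=
  congrArg (fun p => PushV.mk f₁ f₂ x y (.inl p)) (Quot.sound ⟨g, by simp, rfl⟩)

theorem inX_smul (g : G₁) (v : VX) :
    inX f₁ f₂ x y (g • v) = Amal.inl f₁ f₂ g • inX f₁ f₂ x y v := by
  rw [← mk_inl_mk_inl_eq_inX, ← mul_one (Amal.inl f₁ f₂ g)]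
  rfl

theorem inY_smul (g : G₂) (w : VY) :
    inY f₁ f₂ x y (g • w) = Amal.inr f₁ f₂ g • inY f₁ f₂ x y w := by
  rw [← mul_one (Amal.inr f₁ f₂ g)]
  exact congrArg (fun q => PushV.mk f₁ f₂ x y (.inr q)) (Quot.sound ⟨g, by simp, rfl⟩).symm

theorem inX_injective (hf₁ : Function.Injective f₁) (hf₂ : Function.Injective f₂)
    (hx : ∀ c, f₁ c • x = x) (hy : ∀ c, f₂ c • y = y) : Function.Injective (inX f₁ f₂ x y) := by
  intro v w h
  rcases glueRel_of_mk_eq_mk h with h | ⟨g, g', hg, hg', hmem⟩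
  · obtain ⟨a, h₁, rfl⟩ := IndSetH.mk_eq_mk_iff.1 (Sum.inl_injective h)
    have ha : a = 1 := (map_eq_one_iff _ (Amal.inl_injective hf₁ hf₂)).1 (by simpa using h₁.symm)
    rw [ha, one_smul]
  · obtain ⟨r, rfl, rfl⟩ := isBaseTranslate_inl hg
    obtain ⟨r', rfl, rfl⟩ := isBaseTranslate_inl hg'
    have hr : (r⁻¹ * r') • x = x :=
      (Amal.inl_mem_iff hf₁ hf₂ (MonoidHom.range_le_stabilizer hx)
        (MonoidHom.range_le_stabilizer hy)).1 (by simpa [baseStabilizer] using hmem)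
    conv_lhs => rw [← hr, smul_smul, mul_inv_cancel_left]

theorem exists_of_inX_eq_mk_inl {a a' : VX} {g : Amal f₁ f₂} (hg : g ∉ (Amal.inl f₁ f₂).range)
    (h : inX f₁ f₂ x y a = PushV.mk f₁ f₂ x y (.inl (IndSetH.mk _ VX (g, a')))) :
    ∃ r q, a = r • x ∧ a' = q • x ∧
      (Amal.inl f₁ f₂ r)⁻¹ * g * Amal.inl f₁ f₂ q ∈ baseStabilizer f₁ f₂ x y := by
  rcases glueRel_of_mk_eq_mk h with h | ⟨g₁, g₂, h₁, h₂, hmem⟩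
  · obtain ⟨c, hc, -⟩ := IndSetH.mk_eq_mk_iff.1 (Sum.inl_injective h)
    exact absurd ⟨c⁻¹, by simp [eq_mul_inv_of_mul_eq hc.symm]⟩ hg
  · obtain ⟨r, rfl, rfl⟩ := isBaseTranslate_inl h₁
    obtain ⟨q, rfl, rfl⟩ := isBaseTranslate_inl h₂
    exact ⟨r, q, rfl, rfl, by simpa [mul_assoc] using hmem⟩

theorem exists_of_inX_eq_mk_inr {a : VX} {b : VY} {g : Amal f₁ f₂}
    (h : inX f₁ f₂ x y a = PushV.mk f₁ f₂ x y (.inr (IndSetH.mk _ VY (g, b)))) :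
    ∃ r q, a = r • x ∧ b = q • y ∧
      (Amal.inl f₁ f₂ r)⁻¹ * g * Amal.inr f₁ f₂ q ∈ baseStabilizer f₁ f₂ x y := by
  rcases glueRel_of_mk_eq_mk h with h | ⟨g₁, g₂, h₁, h₂, hmem⟩
  · cases h
  · obtain ⟨r, rfl, rfl⟩ := isBaseTranslate_inl h₁
    obtain ⟨q, rfl, rfl⟩ := isBaseTranslate_inr h₂
    exact ⟨r, q, rfl, rfl, by simpa [mul_assoc] using hmem⟩

theorem adj_of_pushAdj_inX (hf₁ : Function.Injective f₁) (hf₂ : Function.Injective f₂)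
    {X : SimpleGraph VX} {Y : SimpleGraph VY}
    (hX : ∀ (g : G₁) (a b : VX), X.Adj a b → X.Adj (g • a) (g • b))
    (hx : ∀ c, f₁ c • x = x) (hy : ∀ c, f₂ c • y = y) {a b : VX}
    (h : PushAdj f₁ f₂ X Y x y (inX f₁ f₂ x y a) (inX f₁ f₂ x y b)) : X.Adj a b := by
  have hS₁ := MonoidHom.range_le_stabilizer hx
  have hS₂ := MonoidHom.range_le_stabilizer hy
  rcases h with ⟨g, a', b', hadj, ha, hb⟩ | ⟨g, a', b', hadj, ha, hb⟩
  · by_cases hg : g ∈ (Amal.inl f₁ f₂).range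
    · obtain ⟨p, rfl⟩ := hg
      rw [mk_inl_mk_inl_eq_inX] at ha hb
      rw [inX_injective hf₁ hf₂ hx hy ha, inX_injective hf₁ hf₂ hx hy hb]
      exact hX p _ _ hadj
    -- Otherwise all four vertices are translates of `x`, and
    -- `Amal.exists_mul_mem_of_inl_mul_mul_inl_mem` yields an element of `G₁` carrying `(a', b')`
    -- to `(a, b)`.
    obtain ⟨r, q, rfl, rfl, hrq⟩ := exists_of_inX_eq_mk_inl hg ha
    obtain ⟨s, q', rfl, rfl, hsq⟩ := exists_of_inX_eq_mk_inl hg hb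
    have hsrq : Amal.inl f₁ f₂ (s⁻¹ * r) * ((Amal.inl f₁ f₂ r)⁻¹ * g * Amal.inl f₁ f₂ q) *
        Amal.inl f₁ f₂ (q⁻¹ * q') = (Amal.inl f₁ f₂ s)⁻¹ * g * Amal.inl f₁ f₂ q' := by
      simp only [map_mul, map_inv]
      group
    obtain ⟨σ, hσ, hmem⟩ := Amal.exists_mul_mem_of_inl_mul_mul_inl_mem hf₁ hf₂ hS₁ hS₂ hrq
      (by rw [hsrq]; exact hsq)
    have hσ : σ • x = x := hσ
    have hmem : (s⁻¹ * r * σ * (q⁻¹ * q')) • x = x := hmem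
    convert hX (r * σ * q⁻¹) _ _ hadj using 1
    · rw [smul_smul, inv_mul_cancel_right, mul_smul, hσ]
    · rw [smul_smul, show r * σ * q⁻¹ * q' = s * (s⁻¹ * r * σ * (q⁻¹ * q')) by group,
        mul_smul, hmem]
  · obtain ⟨r, q, rfl, rfl, hrq⟩ := exists_of_inX_eq_mk_inr ha
    obtain ⟨s, q', rfl, rfl, hsq⟩ := exists_of_inX_eq_mk_inr hb
    have hsrq : Amal.inl f₁ f₂ (s⁻¹ * r) * ((Amal.inl f₁ f₂ r)⁻¹ * g * Amal.inr f₁ f₂ q) *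
        Amal.inr f₁ f₂ (q⁻¹ * q') = (Amal.inl f₁ f₂ s)⁻¹ * g * Amal.inr f₁ f₂ q' := by
      simp only [map_mul, map_inv]
      group
    have hmem : (q⁻¹ * q') • y = y :=
      Amal.mem_of_inl_mul_mul_inr_mem hf₁ hf₂ hS₁ hS₂ hrq (by rw [hsrq]; exact hsq)
    rw [mul_smul, inv_smul_eq_iff] at hmem
    exact absurd hmem.symm hadj.ne

variable (f₁ f₂ x y) in
def swap : PushV f₁ f₂ x y → PushV f₂ f₁ y x :=
  Quot.lift
    (fun u => PushV.mk f₂ f₁ y x <| u.elim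
      (fun p => .inr (IndSetH.map (Amal.swap f₁ f₂) Amal.swap_comp_inl VX p))
      (fun q => .inl (IndSetH.map (Amal.swap f₁ f₂) Amal.swap_comp_inr VY q)))
    (by
      rintro _ _ ⟨g, rfl, rfl⟩
      exact (Quot.sound ⟨Amal.swap f₁ f₂ g, rfl, rfl⟩).symm)

theorem swap_inY (w : VY) : swap f₁ f₂ x y (inY f₁ f₂ x y w) = inX f₂ f₁ y x w := by
  show PushV.mk f₂ f₁ y x (.inl (IndSetH.mk _ VY (Amal.swap f₁ f₂ 1, w))) = _
  rw [map_one]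
  rfl

theorem pushAdj_swap {X : SimpleGraph VX} {Y : SimpleGraph VY} {u v : PushV f₁ f₂ x y}
    (h : PushAdj f₁ f₂ X Y x y u v) :
    PushAdj f₂ f₁ Y X y x (swap f₁ f₂ x y u) (swap f₁ f₂ x y v) := by
  rcases h with ⟨g, a, b, hab, rfl, rfl⟩ | ⟨g, a, b, hab, rfl, rfl⟩
  · exact .inr ⟨Amal.swap f₁ f₂ g, a, b, hab, rfl, rfl⟩
  · exact .inl ⟨Amal.swap f₁ f₂ g, a, b, hab, rfl, rfl⟩

theorem inY_injective (hf₁ : Function.Injective f₁) (hf₂ : Function.Injective f₂)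
    (hx : ∀ c, f₁ c • x = x) (hy : ∀ c, f₂ c • y = y) : Function.Injective (inY f₁ f₂ x y) :=
  Function.Injective.of_comp (f := swap f₁ f₂ x y) <| by
    simpa only [Function.comp_def, swap_inY] using inX_injective hf₂ hf₁ hy hx

theorem adj_of_pushAdj_inY (hf₁ : Function.Injective f₁) (hf₂ : Function.Injective f₂)
    {X : SimpleGraph VX} {Y : SimpleGraph VY}
    (hY : ∀ (g : G₂) (a b : VY), Y.Adj a b → Y.Adj (g • a) (g • b))
    (hx : ∀ c, f₁ c • x = x) (hy : ∀ c, f₂ c • y = y) {a b : VY}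
    (h : PushAdj f₁ f₂ X Y x y (inY f₁ f₂ x y a) (inY f₁ f₂ x y b)) : Y.Adj a b := by
  have h' := pushAdj_swap h
  rw [swap_inY, swap_inY] at h'
  exact adj_of_pushAdj_inX hf₂ hf₁ hY hy hx h'

end PushV

theorem SimpleGraph.adj_iff_fromRel_adj {V W : Type*} (G : SimpleGraph V) {r : W → W → Prop}
    {e : V → W} (he : Function.Injective e) (hG : ∀ a b, G.Adj a b → r (e a) (e b))
    (hr : ∀ a b, r (e a) (e b) → G.Adj a b) (a b : V) :
    G.Adj a b ↔ (SimpleGraph.fromRel r).Adj (e a) (e b) := by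
  rw [SimpleGraph.fromRel_adj]
  exact ⟨fun h => ⟨he.ne h.ne, .inl (hG a b h)⟩,
    fun ⟨_, h⟩ => h.elim (hr a b) fun h => (hr b a h).symm⟩

/-- Let `G = A ∗_C B`, `X` an `A`-graph, `Y` a `B`-graph, `x ∈ X` fixed
by `∂₁(C)` and `y ∈ Y` fixed by `∂₂(C)`, and `Z` the `C`-pushout of `G ×_A X` and
`G ×_B Y` w.r.t. `(x, y)`.  Then the composition `X ↪ G ×_A X → Z` is an `A`-equivariant
embedding of graphs, and likewise `Y ↪ G ×_B Y → Z` is a `B`-equivariant embedding. -/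
theorem pushout_canonical_embeddings
    {C G₁ G₂ : Type*} [Group C] [Group G₁] [Group G₂]
    (f₁ : C →* G₁) (f₂ : C →* G₂)
    (hf₁ : Function.Injective f₁) (hf₂ : Function.Injective f₂)
    {VX VY : Type*} [MulAction G₁ VX] [MulAction G₂ VY]
    (X : SimpleGraph VX) (Y : SimpleGraph VY)
    (hX : ∀ (g : G₁) (a b : VX), X.Adj a b → X.Adj (g • a) (g • b))
    (hY : ∀ (g : G₂) (a b : VY), Y.Adj a b → Y.Adj (g • a) (g • b))
    (x : VX) (y : VY)
    (hx : ∀ c : C, f₁ c • x = x) (hy : ∀ c : C, f₂ c • y = y) :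
    (Function.Injective (PushV.inX f₁ f₂ x y) ∧
      (∀ a b : VX, X.Adj a b ↔
        (PushGraph f₁ f₂ X Y x y).Adj (PushV.inX f₁ f₂ x y a) (PushV.inX f₁ f₂ x y b)) ∧
      (∀ (g : G₁) (v : VX),
        PushV.inX f₁ f₂ x y (g • v) = Amal.inl f₁ f₂ g • PushV.inX f₁ f₂ x y v)) ∧
    (Function.Injective (PushV.inY f₁ f₂ x y) ∧
      (∀ a b : VY, Y.Adj a b ↔
        (PushGraph f₁ f₂ X Y x y).Adj (PushV.inY f₁ f₂ x y a) (PushV.inY f₁ f₂ x y b)) ∧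
      (∀ (g : G₂) (w : VY),
        PushV.inY f₁ f₂ x y (g • w) = Amal.inr f₁ f₂ g • PushV.inY f₁ f₂ x y w)) := by
  refine ⟨⟨PushV.inX_injective hf₁ hf₂ hx hy, ?_, PushV.inX_smul⟩,
    ⟨PushV.inY_injective hf₁ hf₂ hx hy, ?_, PushV.inY_smul⟩⟩
  · exact X.adj_iff_fromRel_adj (PushV.inX_injective hf₁ hf₂ hx hy)
      (fun a b h => .inl ⟨1, a, b, h, rfl, rfl⟩) fun _ _ =>
        PushV.adj_of_pushAdj_inX hf₁ hf₂ hX hx hy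
  · exact Y.adj_iff_fromRel_adj (PushV.inY_injective hf₁ hf₂ hx hy)
      (fun a b h => .inr ⟨1, a, b, h, rfl, rfl⟩) fun _ _ =>
        PushV.adj_of_pushAdj_inY hf₁ hf₂ hY hx hy
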